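/- arXiv:2308.11397 — 3 statements merged into one kernel-verified Lean document; each statement's English description precedes it below -/
import Mathlib

section
/- Let ι : ℕ → ℝ be a strictly increasing sequence with ι(n) > 0 for all n and ι(n) → ∞, let a : ℕ → ℝ be nonnegative, and consider the generalized Dirichlet series D(s) = ∑_{n=0}^∞ a(n)·(ι(n))^{-s}. Suppose the series converges at a point s₀ = σ₀ + i t₀ ∈ ℂ. Then for every H > 0, the partial sums of the series converge uniformly on the sector 𝒯 := {s ∈ ℂ : Re s ≥ σ₀ and |Im s − t₀| ≤ H·(Re s − σ₀)}. -/
open Filter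

lemma integral_exp_mul_real (x : ℝ) (hx : x ≠ 0) (α β : ℝ) :
    ∫ t in α..β, Real.exp (x * t) = (Real.exp (x * β) - Real.exp (x * α)) / x := by
  have D : ∀ t : ℝ, HasDerivAt (fun y : ℝ => Real.exp (x * y) / x) (Real.exp (x * t)) t := by
    intro t
    have h1 : HasDerivAt (fun y : ℝ => x * y) x t := by
      simpa using (hasDerivAt_id t).const_mul x
    have h3 := ((Real.hasDerivAt_exp (x * t)).comp t h1).div_const x
    rwa [mul_div_cancel_right₀ _ hx] at h3
  rw [intervalIntegral.integral_eq_sub_of_hasDerivAt (fun t _ => D t)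
    ((Real.continuous_exp.comp (continuous_const.mul continuous_id)).intervalIntegrable α β)]
  ring

lemma exp_diff_bound (w : ℂ) (hx : 0 < w.re) {α β : ℝ} (hαβ : α ≤ β) :
    ‖Complex.exp (-w * α) - Complex.exp (-w * β)‖ ≤
      (‖w‖ / w.re) * (Real.exp (-w.re * α) - Real.exp (-w.re * β)) := by
  have hw : w ≠ 0 := fun h => by simp [h] at hx
  have hwn : (-w) ≠ 0 := neg_ne_zero.mpr hw
  have h1 : Complex.exp (-w * α) - Complex.exp (-w * β)
      = w * ∫ t in α..β, Complex.exp (-w * t) := by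
    rw [integral_exp_mul_complex hwn]
    field_simp
    ring
  rw [h1, norm_mul]
  have h3 : (∫ t in α..β, Real.exp (-w.re * t))
      = (Real.exp (-w.re * α) - Real.exp (-w.re * β)) / w.re := by
    rw [integral_exp_mul_real (-w.re) (by simpa using hx.ne') α β]
    ring
  have h2 : ‖∫ t in α..β, Complex.exp (-w * t)‖
      ≤ ∫ t in α..β, Real.exp (-w.re * t) := by
    refine (intervalIntegral.norm_integral_le_integral_norm hαβ).trans (le_of_eq ?_)
    apply intervalIntegral.integral_congr
    intro t _
    simp only []
    rw [Complex.norm_exp]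
    congr 1
    simp [Complex.mul_re]
  calc ‖w‖ * ‖∫ t in α..β, Complex.exp (-w * t)‖
      ≤ ‖w‖ * ((Real.exp (-w.re * α) - Real.exp (-w.re * β)) / w.re) := by
        rw [← h3]; exact mul_le_mul_of_nonneg_left h2 (norm_nonneg w)
    _ = (‖w‖ / w.re) * (Real.exp (-w.re * α) - Real.exp (-w.re * β)) := by ring

lemma abel_bound (b : ℕ → ℂ) (lam : ℕ → ℝ) (hlam : Monotone lam)
    (w : ℂ) (hx : 0 < w.re) (C : ℝ) (hwC : ‖w‖ ≤ C * w.re)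
    (ε : ℝ) (hε : 0 ≤ ε)
    (M N : ℕ) (hMN : M ≤ N)
    (hlam0 : ∀ n, M ≤ n → 0 ≤ lam n)
    (hS : ∀ m n, M ≤ m → M ≤ n → m ≤ n → ‖∑ j ∈ Finset.Ico m n, b j‖ ≤ ε) :
    ‖∑ n ∈ Finset.Ico M N, b n * Complex.exp (-w * (lam n : ℂ))‖ ≤ ε * (1 + C) := by
  have hC : 0 ≤ C := by nlinarith [norm_nonneg w]
  set L := N - M with hL
  set c : ℕ → ℂ := fun i => Complex.exp (-w * (lam (M + i) : ℂ)) with hc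
  set g : ℕ → ℂ := fun i => b (M + i) with hg
  set E : ℕ → ℝ := fun i => Real.exp (-w.re * lam (M + i)) with hE
  have hcE : ∀ i, ‖c i‖ = E i := by
    intro i
    rw [hc]
    simp only []
    rw [Complex.norm_exp, hE]
    congr 1
    simp [Complex.mul_re]
  have hE1 : ∀ i, E i ≤ 1 := by
    intro i
    rw [hE]
    simp only []
    rw [Real.exp_le_one_iff, neg_mul]
    exact neg_nonpos.mpr (mul_nonneg hx.le (hlam0 _ (Nat.le_add_right M i)))
  have hEpos : ∀ i, 0 ≤ E i := fun i => (Real.exp_pos _).le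
  have hP : ∀ k, ‖∑ j ∈ Finset.range k, g j‖ ≤ ε := by
    intro k
    have h : ∑ j ∈ Finset.range k, g j = ∑ j ∈ Finset.Ico M (M + k), b j := by
      rw [Finset.sum_Ico_eq_sum_range]
      simp [hg]
    rw [h]
    exact hS M (M + k) le_rfl (Nat.le_add_right M k) (Nat.le_add_right M k)
  have hdiff : ∀ i, ‖c (i + 1) - c i‖ ≤ C * (E i - E (i + 1)) := by
    intro i
    have hαβ : lam (M + i) ≤ lam (M + (i + 1)) := hlam (by omega)
    have h := exp_diff_bound w hx hαβ
    rw [norm_sub_rev]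
    refine h.trans ?_
    have h1 : ‖w‖ / w.re ≤ C := (div_le_iff₀ hx).mpr hwC
    have h2 : Real.exp (-w.re * lam (M + (i + 1))) ≤ Real.exp (-w.re * lam (M + i)) :=
      Real.exp_le_exp.mpr (by nlinarith)
    have h2' : 0 ≤ Real.exp (-w.re * lam (M + i)) - Real.exp (-w.re * lam (M + (i + 1))) := by
      linarith
    exact mul_le_mul_of_nonneg_right h1 h2'
  have h1 : ∑ n ∈ Finset.Ico M N, b n * Complex.exp (-w * (lam n : ℂ))
      = ∑ i ∈ Finset.range L, c i • g i := by
    rw [Finset.sum_Ico_eq_sum_range]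
    exact Finset.sum_congr rfl fun i _ => by rw [hc, hg]; simp [smul_eq_mul]; ring
  rw [h1, Finset.sum_range_by_parts c g L]
  have hsum1 : ‖c (L - 1) • ∑ i ∈ Finset.range L, g i‖ ≤ ε := by
    rw [smul_eq_mul, norm_mul]
    calc ‖c (L - 1)‖ * ‖∑ i ∈ Finset.range L, g i‖
        ≤ 1 * ε := mul_le_mul (by rw [hcE]; exact hE1 _) (hP L) (norm_nonneg _) zero_le_one
      _ = ε := one_mul ε
  have hsum2 : ‖∑ i ∈ Finset.range (L - 1),
      (c (i + 1) - c i) • (∑ j ∈ Finset.range (i + 1), g j)‖ ≤ C * ε := by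
    calc ‖∑ i ∈ Finset.range (L - 1), (c (i + 1) - c i) • (∑ j ∈ Finset.range (i + 1), g j)‖
        ≤ ∑ i ∈ Finset.range (L - 1), ‖(c (i + 1) - c i) • (∑ j ∈ Finset.range (i + 1), g j)‖ :=
          norm_sum_le _ _
      _ ≤ ∑ i ∈ Finset.range (L - 1), (C * (E i - E (i + 1))) * ε := by
          refine Finset.sum_le_sum fun i _ => ?_
          rw [smul_eq_mul, norm_mul]
          refine mul_le_mul (hdiff i) (hP (i + 1)) (norm_nonneg _) ?_
          have := hdiff i
          exact le_trans (norm_nonneg _) this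
      _ = C * ε * ∑ i ∈ Finset.range (L - 1), (E i - E (i + 1)) := by
          rw [Finset.mul_sum]
          exact Finset.sum_congr rfl fun i _ => by ring
      _ = C * ε * (E 0 - E (L - 1)) := by rw [Finset.sum_range_sub' E (L - 1)]
      _ ≤ C * ε * 1 := by
          have h0 := hE1 0
          have hl := hEpos (L - 1)
          exact mul_le_mul_of_nonneg_left (by linarith) (mul_nonneg hC hε)
      _ = C * ε := mul_one _
  calc ‖c (L - 1) • (∑ i ∈ Finset.range L, g i) - ∑ i ∈ Finset.range (L - 1),
          (c (i + 1) - c i) • (∑ j ∈ Finset.range (i + 1), g j)‖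
      ≤ ‖c (L - 1) • ∑ i ∈ Finset.range L, g i‖ + ‖∑ i ∈ Finset.range (L - 1),
          (c (i + 1) - c i) • (∑ j ∈ Finset.range (i + 1), g j)‖ := norm_sub_le _ _
    _ ≤ ε + C * ε := add_le_add hsum1 hsum2
    _ = ε * (1 + C) := by ring


/-- If the generalized Dirichlet series `∑ a n · ι n ^ (-s)` (with `ι` a positive strictly
increasing sequence tending to `∞` and nonnegative coefficients `a`) converges at a point `s₀`,
then for every `H > 0` its partial sums converge uniformly on the sector
`{s : Re s ≥ Re s₀ ∧ |Im s − Im s₀| ≤ H·(Re s − Re s₀)}`. -/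
theorem stmt_2 (ι : ℕ → ℝ) (hι : StrictMono ι) (hιpos : ∀ n, 0 < ι n)
    (hιtop : Tendsto ι atTop atTop)
    (a : ℕ → ℝ) (ha : ∀ n, 0 ≤ a n)
    (s₀ : ℂ)
    (hconv : ∃ L : ℂ, Tendsto
      (fun N : ℕ => ∑ n ∈ Finset.range N, (a n : ℂ) * Complex.exp (-s₀ * (Real.log (ι n) : ℂ)))
      atTop (nhds L))
    (H : ℝ) (hH : 0 < H) :
    ∃ D : ℂ → ℂ, TendstoUniformlyOn
      (fun (N : ℕ) (s : ℂ) =>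
        ∑ n ∈ Finset.range N, (a n : ℂ) * Complex.exp (-s * (Real.log (ι n) : ℂ)))
      D atTop
      {s : ℂ | s₀.re ≤ s.re ∧ |s.im - s₀.im| ≤ H * (s.re - s₀.re)} := by
  classical
  set lam : ℕ → ℝ := fun n => Real.log (ι n) with hlam_def
  set F : ℕ → ℂ → ℂ := fun N s => ∑ n ∈ Finset.range N, (a n : ℂ) * Complex.exp (-s * (lam n : ℂ))
    with hF_def
  set T := {s : ℂ | s₀.re ≤ s.re ∧ |s.im - s₀.im| ≤ H * (s.re - s₀.re)} with hT_def
  set b : ℕ → ℂ := fun n => (a n : ℂ) * Complex.exp (-s₀ * (lam n : ℂ)) with hb_def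
  set C := Real.sqrt (1 + H ^ 2) with hC_def
  have hC0 : 0 ≤ C := Real.sqrt_nonneg _
  have hlam_mono : Monotone lam := fun m n h =>
    Real.log_le_log (hιpos m) (hι.monotone h)
  -- sector estimate
  have hsector : ∀ s ∈ T, ‖s - s₀‖ ≤ C * (s - s₀).re := by
    intro s hs
    obtain ⟨h1, h2⟩ := hs
    have hre : 0 ≤ (s - s₀).re := by rw [Complex.sub_re]; linarith
    have him : (s.im - s₀.im) * (s.im - s₀.im)
        ≤ (H * (s.re - s₀.re)) * (H * (s.re - s₀.re)) := by
      have h3 := mul_self_le_mul_self (abs_nonneg (s.im - s₀.im)) h2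
      rwa [abs_mul_abs_self] at h3
    rw [Complex.norm_def, Complex.normSq_apply]
    have harg : (s - s₀).re * (s - s₀).re + (s - s₀).im * (s - s₀).im
        ≤ (1 + H ^ 2) * (s - s₀).re ^ 2 := by
      rw [Complex.sub_re, Complex.sub_im]
      nlinarith [him]
    calc Real.sqrt ((s - s₀).re * (s - s₀).re + (s - s₀).im * (s - s₀).im)
        ≤ Real.sqrt ((1 + H ^ 2) * (s - s₀).re ^ 2) := Real.sqrt_le_sqrt harg
      _ = C * (s - s₀).re := by
          rw [Real.sqrt_mul (by positivity), Real.sqrt_sq hre]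
  -- partial sums at s₀ are Cauchy
  obtain ⟨L₀, hL₀⟩ := hconv
  have hScau : CauchySeq (fun N => F N s₀) := hL₀.cauchySeq
  obtain ⟨K₂, hK₂⟩ := eventually_atTop.mp (hιtop.eventually (eventually_ge_atTop (1 : ℝ)))
  have hlam0 : ∀ n, K₂ ≤ n → 0 ≤ lam n := fun n hn => Real.log_nonneg (hK₂ n hn)
  -- term factorization
  have hterm : ∀ (s : ℂ) (n : ℕ),
      (a n : ℂ) * Complex.exp (-s * (lam n : ℂ))
        = b n * Complex.exp (-(s - s₀) * (lam n : ℂ)) := by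
    intro s n
    rw [hb_def]
    simp only []
    have h : -s₀ * (lam n : ℂ) + -(s - s₀) * (lam n : ℂ) = -s * (lam n : ℂ) := by ring
    rw [mul_assoc, ← Complex.exp_add, h]
  have hUC : UniformCauchySeqOn F atTop T := by
    rw [Metric.uniformCauchySeqOn_iff]
    intro ε hε
    set ε' := ε / (2 * (1 + C)) with hε'_def
    have hε'pos : 0 < ε' := by positivity
    obtain ⟨K₁, hK₁⟩ := Metric.cauchySeq_iff.mp hScau ε' hε'pos
    have key : ∀ M N, max K₁ K₂ ≤ M → M ≤ N → ∀ s ∈ T,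
        ‖F N s - F M s‖ ≤ ε' * (1 + C) := by
      intro M N hM hMN s hs
      have hM₁ : K₁ ≤ M := le_trans (le_max_left _ _) hM
      have hM₂ : K₂ ≤ M := le_trans (le_max_right _ _) hM
      have hwtri : ‖s - s₀‖ ≤ C * (s - s₀).re := hsector s hs
      have hxnn : 0 ≤ (s - s₀).re := by rw [Complex.sub_re]; linarith [hs.1]
      have hS : ∀ m n, M ≤ m → M ≤ n → m ≤ n → ‖∑ j ∈ Finset.Ico m n, b j‖ ≤ ε' := by
        intro m n hm hn hmn
        have h : ∑ j ∈ Finset.Ico m n, b j = F n s₀ - F m s₀ := by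
          rw [hF_def]
          simp only []
          rw [← Finset.sum_Ico_eq_sub _ hmn]
        rw [h, ← dist_eq_norm, dist_comm]
        exact (hK₁ m (le_trans hM₁ hm) n (le_trans hM₁ hn)).le
      have hFsub : F N s - F M s
          = ∑ n ∈ Finset.Ico M N, b n * Complex.exp (-(s - s₀) * (lam n : ℂ)) := by
        rw [hF_def]
        simp only []
        rw [← Finset.sum_Ico_eq_sub _ hMN]
        exact Finset.sum_congr rfl fun n _ => hterm s n
      rcases eq_or_lt_of_le hxnn with hx0 | hxpos
      · have hw0 : s - s₀ = 0 := by
          have h2 : ‖s - s₀‖ ≤ 0 := by rw [← hx0, mul_zero] at hwtri; exact hwtri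
          exact norm_le_zero_iff.mp h2
        have hss : s = s₀ := by rwa [sub_eq_zero] at hw0
        rw [hss, ← dist_eq_norm]
        have h3 := (hK₁ N (le_trans hM₁ hMN) M hM₁).le
        calc dist (F N s₀) (F M s₀) ≤ ε' := h3
          _ ≤ ε' * (1 + C) := le_mul_of_one_le_right hε'pos.le (by linarith)
      · rw [hFsub]
        exact abel_bound b lam hlam_mono (s - s₀) hxpos C hwtri ε' hε'pos.le M N hMN
          (fun n hn => hlam0 n (le_trans hM₂ hn)) hS
    refine ⟨max K₁ K₂, fun m hm n hn s hs => ?_⟩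
    have hhalf : ε' * (1 + C) = ε / 2 := by
      rw [hε'_def]
      field_simp
    rcases le_total m n with h | h
    · have hk := key m n hm h s hs
      rw [dist_eq_norm, norm_sub_rev]
      calc ‖F n s - F m s‖ ≤ ε' * (1 + C) := hk
        _ < ε := by rw [hhalf]; linarith
    · have hk := key n m hn h s hs
      rw [dist_eq_norm]
      calc ‖F m s - F n s‖ ≤ ε' * (1 + C) := hk
        _ < ε := by rw [hhalf]; linarith
  have hptwise : ∀ s ∈ T, ∃ l : ℂ, Tendsto (fun N => F N s) atTop (nhds l) := by
    intro s hs
    have hcs : CauchySeq (fun N => F N s) := by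
      rw [Metric.cauchySeq_iff]
      intro ε hε
      obtain ⟨N₀, hN₀⟩ := Metric.uniformCauchySeqOn_iff.mp hUC ε hε
      exact ⟨N₀, fun m hm n hn => hN₀ m hm n hn s hs⟩
    exact cauchySeq_tendsto_of_complete hcs
  choose! D hD using hptwise
  exact ⟨D, hUC.tendstoUniformlyOn_of_tendsto hD⟩
end

section
/- Let ι : ℕ → ℝ be a strictly increasing sequence with ι(n) > 0 for all n and ι(n) → ∞, let a : ℕ → ℝ be nonnegative, and suppose the generalized Dirichlet series ∑_{n=0}^∞ a(n)·(ι(n))^{-s₀} converges at s₀ ∈ ℂ. Define the remainder R(u) := ∑_{n : ι(n) > u} a(n)·(ι(n))^{-s₀} for u ≥ 0. Then for all natural numbers M < N and every s ∈ ℂ, one has the identity ∑_{n=M+1}^{N} a(n)·(ι(n))^{-s} = R(ι(M))·(ι(M))^{s₀−s} − R(ι(N))·(ι(N))^{s₀−s} + (s₀−s)·∫_{ι(M)}^{ι(N)} R(u)·u^{s₀−s−1} du. -/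
/-!
The tail `R` is a right-continuous step function: it equals `R (ι n)` on `[ι n, ι (n + 1))`
and drops by `c (n + 1) = a (n + 1) (ι (n + 1))^{-s₀}` at `ι (n + 1)`. Writing
`a n (ι n)^{-s} = c n · (ι n)^w` with `w = s₀ - s`, the sum is an Abel summation of the jumps
of `R` against `u ↦ u^w`, and on each step
`∫ R(u) · w u^{w-1} du = R (ι n) ((ι (n + 1))^w - (ι n)^w)`.
-/

open Filter MeasureTheory Set

lemma hasDerivAt_cexp_mul_log (w : ℂ) {u : ℝ} (hu : 0 < u) :
    HasDerivAt (fun x : ℝ => Complex.exp (w * Real.log x))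
      (w * Complex.exp ((w - 1) * Real.log u)) u := by
  have hexp : Complex.exp ((w - 1) * Real.log u)
      = Complex.exp (w * Real.log u) * ((u⁻¹ : ℝ) : ℂ) := by
    rw [sub_one_mul, sub_eq_add_neg, Complex.exp_add, ← Complex.ofReal_neg,
      ← Complex.ofReal_exp, Real.exp_neg, Real.exp_log hu]
  rw [hexp, mul_left_comm]
  exact (((Real.hasDerivAt_log hu.ne').ofReal_comp).const_mul w).cexp

lemma continuousOn_cexp_mul_log (w : ℂ) :
    ContinuousOn (fun x : ℝ => Complex.exp (w * Real.log x)) {0}ᶜ :=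
  (continuousOn_const.mul
    (Complex.continuous_ofReal.comp_continuousOn Real.continuousOn_log)).cexp

lemma pos_of_mem_uIcc {a b x : ℝ} (ha : 0 < a) (hb : 0 < b) (hx : x ∈ uIcc a b) : 0 < x :=
  (lt_min ha hb).trans_le hx.1

lemma intervalIntegrable_cexp_mul_log (w : ℂ) {a b : ℝ} (ha : 0 < a) (hb : 0 < b) :
    IntervalIntegrable (fun x : ℝ => Complex.exp (w * Real.log x)) volume a b :=
  ((continuousOn_cexp_mul_log w).mono
    fun _ hx => (pos_of_mem_uIcc ha hb hx).ne').intervalIntegrable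

lemma integral_cexp_mul_log (w : ℂ) {a b : ℝ} (ha : 0 < a) (hb : 0 < b) :
    w * ∫ u in a..b, Complex.exp ((w - 1) * Real.log u)
      = Complex.exp (w * Real.log b) - Complex.exp (w * Real.log a) := by
  rw [← intervalIntegral.integral_const_mul]
  exact intervalIntegral.integral_eq_sub_of_hasDerivAt
    (fun x hx => hasDerivAt_cexp_mul_log w (pos_of_mem_uIcc ha hb hx))
    ((intervalIntegrable_cexp_mul_log _ ha hb).const_mul w)

lemma Finset.sum_Ico_sub_mul_succ {K : Type*} [CommRing K] {M N : ℕ} (hMN : M ≤ N)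
    (r F : ℕ → K) :
    ∑ n ∈ Finset.Ico M N, (r n - r (n + 1)) * F (n + 1)
      = r M * F M - r N * F N + ∑ n ∈ Finset.Ico M N, r n * (F (n + 1) - F n) := by
  have htelescope := Finset.sum_Ico_sub (fun n => r n * F n) hMN
  rw [← sub_eq_iff_eq_add', ← neg_sub (r N * F N), ← htelescope, sub_neg_eq_add,
    ← Finset.sum_add_distrib]
  exact Finset.sum_congr rfl fun n _ => by ring

section StepFunction

variable {R g : ℝ → ℂ}

lemma ae_mul_eq_const_mul_of_eqOn_Ico {a b : ℝ} (hab : a ≤ b) {r : ℂ}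
    (hR : EqOn R (fun _ => r) (Ico a b)) :
    ∀ᵐ u, u ∈ uIoc a b → R u * g u = r * g u := by
  filter_upwards [Measure.ae_ne volume b] with u hub hu
  rw [uIoc_of_le hab] at hu
  rw [hR ⟨hu.1.le, lt_of_le_of_ne hu.2 hub⟩]

lemma intervalIntegrable_mul_of_eqOn_Ico {a b : ℝ} (hab : a ≤ b) {r : ℂ}
    (hR : EqOn R (fun _ => r) (Ico a b)) (hg : IntervalIntegrable g volume a b) :
    IntervalIntegrable (fun u => R u * g u) volume a b := by
  refine (hg.const_mul r).congr_ae ?_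
  rw [EventuallyEq, ae_restrict_iff' measurableSet_uIoc]
  filter_upwards [ae_mul_eq_const_mul_of_eqOn_Ico (g := g) hab hR] with u hu hmem
  exact (hu hmem).symm

lemma integral_mul_eq_of_eqOn_Ico {a b : ℝ} (hab : a ≤ b) {r : ℂ}
    (hR : EqOn R (fun _ => r) (Ico a b)) :
    ∫ u in a..b, R u * g u = r * ∫ u in a..b, g u := by
  rw [← intervalIntegral.integral_const_mul]
  exact intervalIntegral.integral_congr_ae (ae_mul_eq_const_mul_of_eqOn_Ico hab hR)

lemma integral_mul_eq_sum_of_eqOn_Ico {x : ℕ → ℝ} (hx : Monotone x)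
    (hR : ∀ n, EqOn R (fun _ => R (x n)) (Ico (x n) (x (n + 1))))
    (hg : ∀ n, IntervalIntegrable g volume (x n) (x (n + 1))) {M N : ℕ} (hMN : M ≤ N) :
    ∫ u in x M..x N, R u * g u
      = ∑ n ∈ Finset.Ico M N, R (x n) * ∫ u in x n..x (n + 1), g u := by
  have hstep (n : ℕ) : x n ≤ x (n + 1) := hx n.le_succ
  rw [← intervalIntegral.sum_integral_adjacent_intervals_Ico hMN
    fun n _ => intervalIntegrable_mul_of_eqOn_Ico (hstep n) (hR n) (hg n)]
  exact Finset.sum_congr rfl fun n _ => integral_mul_eq_of_eqOn_Ico (hstep n) (hR n)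

end StepFunction

section Tail

variable {ι : ℕ → ℝ} (hι : StrictMono ι) {c : ℕ → ℂ} {R : ℝ → ℂ}
  (hR : ∀ u : ℝ, Tendsto (fun K : ℕ => ∑ k ∈ Finset.range K, if u < ι k then c k else 0)
    atTop (nhds (R u)))
include hι

lemma StrictMono.lt_apply_iff_of_mem_Ico {u : ℝ} {n k : ℕ}
    (hu : u ∈ Ico (ι n) (ι (n + 1))) :
    u < ι k ↔ n < k :=
  ⟨fun h => hι.lt_iff_lt.mp (hu.1.trans_lt h), fun h => hu.2.trans_le (hι.monotone h)⟩

include hR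

lemma tail_eqOn_Ico (n : ℕ) : EqOn R (fun _ => R (ι n)) (Ico (ι n) (ι (n + 1))) := by
  intro u hu
  have hιn : ι n ∈ Ico (ι n) (ι (n + 1)) := ⟨le_rfl, hι n.lt_succ_self⟩
  refine tendsto_nhds_unique (hR u) ((hR (ι n)).congr fun K => Finset.sum_congr rfl fun k _ => ?_)
  simp only [hι.lt_apply_iff_of_mem_Ico hu, hι.lt_apply_iff_of_mem_Ico hιn]

lemma tail_sub_tail_succ (n : ℕ) : R (ι n) - R (ι (n + 1)) = c (n + 1) := by
  refine tendsto_nhds_unique ((hR (ι n)).sub (hR (ι (n + 1)))) (tendsto_const_nhds.congr' ?_)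
  filter_upwards [eventually_gt_atTop (n + 1)] with K hK
  have hjump : ∀ k, ((if ι n < ι k then c k else 0) - if ι (n + 1) < ι k then c k else 0)
      = if n + 1 = k then c k else 0 := by
    intro k
    simp only [hι.lt_iff_lt]
    split_ifs <;> first | omega | simp
  rw [← Finset.sum_sub_distrib, Finset.sum_congr rfl fun k _ => hjump k, Finset.sum_ite_eq,
    if_pos (Finset.mem_range.mpr hK)]

end Tail

theorem stmt_3_general (ι : ℕ → ℝ) (hι : StrictMono ι) (hιpos : ∀ n, 0 < ι n)
    (a : ℕ → ℝ)
    (s₀ : ℂ)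
    (R : ℝ → ℂ)
    (hR : ∀ u : ℝ, Tendsto
      (fun N : ℕ => ∑ n ∈ Finset.range N,
        if u < ι n then (a n : ℂ) * Complex.exp (-s₀ * (Real.log (ι n) : ℂ)) else 0)
      atTop (nhds (R u)))
    (M N : ℕ) (hMN : M < N) (s : ℂ) :
    ∑ n ∈ Finset.Icc (M + 1) N, (a n : ℂ) * Complex.exp (-s * (Real.log (ι n) : ℂ))
      = R (ι M) * Complex.exp ((s₀ - s) * (Real.log (ι M) : ℂ))
        - R (ι N) * Complex.exp ((s₀ - s) * (Real.log (ι N) : ℂ))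
        + (s₀ - s) * ∫ u in (ι M)..(ι N), R u * Complex.exp ((s₀ - s - 1) * (Real.log u : ℂ)) := by
  set F : ℕ → ℂ := fun n => Complex.exp ((s₀ - s) * Real.log (ι n))
  have hterm : ∀ n, (a (n + 1) : ℂ) * Complex.exp (-s * Real.log (ι (n + 1)))
      = (R (ι n) - R (ι (n + 1))) * F (n + 1) := by
    intro n
    rw [tail_sub_tail_succ hι hR, mul_assoc, ← Complex.exp_add]
    congr 2
    ring
  rw [← Finset.Ico_add_one_right_eq_Icc, ← Finset.sum_Ico_add',
    Finset.sum_congr rfl fun n _ => hterm n, Finset.sum_Ico_sub_mul_succ hMN.le,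
    integral_mul_eq_sum_of_eqOn_Ico hι.monotone (tail_eqOn_Ico hι hR)
      (fun n => intervalIntegrable_cexp_mul_log _ (hιpos n) (hιpos (n + 1))) hMN.le,
    Finset.mul_sum]
  congr 1
  refine Finset.sum_congr rfl fun n _ => ?_
  rw [mul_left_comm, integral_cexp_mul_log _ (hιpos n) (hιpos (n + 1))]

/-- Abel summation identity for tails of a generalized Dirichlet series: with
`R u = ∑_{n : ι n > u} a n · (ι n)^(-s₀)` (given as the limit of its partial sums), for
`M < N` and any `s ∈ ℂ`,
`∑_{n=M+1}^{N} a n (ι n)^{-s} = R(ι M)(ι M)^{s₀−s} − R(ι N)(ι N)^{s₀−s}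
  + (s₀−s)·∫_{ι M}^{ι N} R(u) u^{s₀−s−1} du`. -/
theorem stmt_3 (ι : ℕ → ℝ) (hι : StrictMono ι) (hιpos : ∀ n, 0 < ι n)
    (hιtop : Tendsto ι atTop atTop)
    (a : ℕ → ℝ) (ha : ∀ n, 0 ≤ a n)
    (s₀ : ℂ)
    (hconv : ∃ L : ℂ, Tendsto
      (fun N : ℕ => ∑ n ∈ Finset.range N, (a n : ℂ) * Complex.exp (-s₀ * (Real.log (ι n) : ℂ)))
      atTop (nhds L))
    (R : ℝ → ℂ)
    (hR : ∀ u : ℝ, Tendsto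
      (fun N : ℕ => ∑ n ∈ Finset.range N,
        if u < ι n then (a n : ℂ) * Complex.exp (-s₀ * (Real.log (ι n) : ℂ)) else 0)
      atTop (nhds (R u)))
    (M N : ℕ) (hMN : M < N) (s : ℂ) :
    ∑ n ∈ Finset.Icc (M + 1) N, (a n : ℂ) * Complex.exp (-s * (Real.log (ι n) : ℂ))
      = R (ι M) * Complex.exp ((s₀ - s) * (Real.log (ι M) : ℂ))
        - R (ι N) * Complex.exp ((s₀ - s) * (Real.log (ι N) : ℂ))
        + (s₀ - s) * ∫ u in (ι M)..(ι N), R u * Complex.exp ((s₀ - s - 1) * (Real.log u : ℂ)) :=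
  stmt_3_general ι hι hιpos a s₀ R hR M N hMN s
end

section
/- Let ι : ℕ → ℝ be a strictly increasing sequence with ι(n) > 0 for all n and ι(n) → ∞, let a : ℕ → ℝ be nonnegative and not identically zero, and let A(x) := ∑_{n : ι(n) < x} a(n). Suppose the set {σ ∈ ℝ : ∑_{n} a(n)·(ι(n))^{-σ} converges} is nonempty and let σ_c be its infimum (the abscissa of convergence). If σ_c ≥ 0, then limsup_{x→∞} (log A(x))/(log x) = σ_c, and for every s ∈ ℂ with Re s > σ_c one has D(s) = s·∫_0^∞ x^{-s-1}·A(x) dx, where D(s) = ∑_{n=0}^∞ a(n)·(ι(n))^{-s}. -/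
open Filter MeasureTheory Set Topology

/-!
Write `A(x) = ∑_{ι n < x} a n` as the sum of the indicators of the rays `(ι n, ∞)` weighted by
`a n`, and integrate against `x^{-s-1}` term by term (Tonelli for real `σ > 0`, dominated
convergence for complex `s`): since `s ∫_{ι n}^∞ x^{-s-1} dx = ι n ^ {-s}`, this gives
`D(s) = s ∫_0^∞ x^{-s-1} A(x) dx`, and for real `σ > 0` the integral is finite exactly when
`D(σ)` converges.

For the growth of `A`: if `D(σ)` converges then `A(x) ≤ x^σ D(σ)`, so the limsup is at most
`σ_c`. Conversely, if `A(x) ≤ x^σ` for large `x` then `x^{-σ'-1} A(x)` is integrable for every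
`σ' > σ` (it vanishes below `min ι`), so `D(σ')` converges and `σ_c ≤ σ'`.
-/

noncomputable def summatory (ι a : ℕ → ℝ) (x : ℝ) : ℝ :=
  ∑ᶠ n ∈ {n : ℕ | ι n < x}, a n

variable {ι a : ℕ → ℝ}

theorem finite_setOf_lt (hι : Tendsto ι atTop atTop) (x : ℝ) : {n | ι n < x}.Finite := by
  have h := hι.eventually (eventually_ge_atTop x)
  rw [← Nat.cofinite_eq_atTop, eventually_cofinite] at h
  simpa only [not_le] using h

theorem tsum_indicator_Ioi {M : Type*} [AddCommMonoid M] [TopologicalSpace M]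
    (hι : Tendsto ι atTop atTop) (f : ℕ → ℝ → M) (x : ℝ) :
    ∑' n, (Ioi (ι n)).indicator (f n) x = ∑ᶠ n ∈ {n | ι n < x}, f n x := by
  rw [tsum_eq_finsum ((finite_setOf_lt hι x).subset fun n hn => ?_), finsum_mem_def]
  · rfl
  · by_contra h
    exact hn (indicator_of_notMem (show x ∉ Ioi (ι n) from h) _)

theorem summatory_eq_sum (hι : Tendsto ι atTop atTop) (x : ℝ) :
    summatory ι a x = ∑ n ∈ (finite_setOf_lt hι x).toFinset, a n := by
  rw [summatory, ← finsum_mem_coe_finset, Finite.coe_toFinset]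

theorem summatory_nonneg (ha : ∀ n, 0 ≤ a n) (x : ℝ) : 0 ≤ summatory ι a x :=
  finsum_nonneg fun n => finsum_nonneg fun _ => ha n

theorem le_summatory (hι : Tendsto ι atTop atTop) (ha : ∀ n, 0 ≤ a n) {m : ℕ} {x : ℝ}
    (hm : ι m < x) : a m ≤ summatory ι a x := by
  rw [summatory_eq_sum hι]
  exact Finset.single_le_sum (fun n _ => ha n) (by simpa using hm)

theorem monotone_summatory (hι : Tendsto ι atTop atTop) (ha : ∀ n, 0 ≤ a n) :
    Monotone (summatory ι a) := fun x y hxy => by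
  rw [summatory_eq_sum hι, summatory_eq_sum hι]
  refine Finset.sum_le_sum_of_subset_of_nonneg (fun n hn => ?_) fun n _ _ => ha n
  simp only [Finite.mem_toFinset, mem_ofPred_eq] at hn ⊢
  exact hn.trans_le hxy

theorem summatory_eq_zero_of_forall_le {x : ℝ} (hx : ∀ n, x ≤ ι n) :
    summatory ι a x = 0 := by
  have hempty : {n | ι n < x} = ∅ := eq_empty_iff_forall_notMem.mpr fun n => (hx n).not_gt
  rw [summatory, hempty, finsum_mem_empty]

theorem summatory_le_tsum_mul_rpow (hιpos : ∀ n, 0 < ι n) (hι : Tendsto ι atTop atTop)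
    (ha : ∀ n, 0 ≤ a n) {σ : ℝ} (hσ : 0 ≤ σ)
    (hsum : Summable fun n => a n * ι n ^ (-σ))
    {x : ℝ} (hx : 0 < x) : summatory ι a x ≤ (∑' n, a n * ι n ^ (-σ)) * x ^ σ := by
  have hterm : ∀ n, 0 ≤ a n * ι n ^ (-σ) := fun n =>
    mul_nonneg (ha n) (Real.rpow_nonneg (hιpos n).le _)
  rw [summatory_eq_sum hι]
  calc ∑ n ∈ (finite_setOf_lt hι x).toFinset, a n
      ≤ ∑ n ∈ (finite_setOf_lt hι x).toFinset, a n * ι n ^ (-σ) * x ^ σ := by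
        refine Finset.sum_le_sum fun n hn => ?_
        have hnx : ι n < x := by simpa using hn
        calc a n = a n * ι n ^ (-σ) * ι n ^ σ := by
              rw [Real.rpow_neg (hιpos n).le, mul_assoc,
                inv_mul_cancel₀ (Real.rpow_pos_of_pos (hιpos n) σ).ne', mul_one]
          _ ≤ a n * ι n ^ (-σ) * x ^ σ := by
              gcongr
              · exact hterm n
              · exact (hιpos n).le
    _ = (∑ n ∈ (finite_setOf_lt hι x).toFinset, a n * ι n ^ (-σ)) * x ^ σ := by
        rw [Finset.sum_mul]
    _ ≤ (∑' n, a n * ι n ^ (-σ)) * x ^ σ := by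
        gcongr
        exact hsum.sum_le_tsum _ fun n _ => hterm n

theorem summable_mul_rpow_neg_of_le (hι : Tendsto ι atTop atTop) (ha : ∀ n, 0 ≤ a n)
    {σ τ : ℝ} (hsum : Summable fun n => a n * ι n ^ (-σ)) (hστ : σ ≤ τ) :
    Summable fun n => a n * ι n ^ (-τ) := by
  refine hsum.of_norm_bounded_eventually_nat ?_
  filter_upwards [hι.eventually_ge_atTop 1] with n hn
  rw [Real.norm_of_nonneg (mul_nonneg (ha n) (Real.rpow_nonneg (zero_le_one.trans hn) _))]
  exact mul_le_mul_of_nonneg_left (Real.rpow_le_rpow_of_exponent_le hn (by linarith)) (ha n)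

theorem summable_of_sInf_lt (hι : Tendsto ι atTop atTop) (ha : ∀ n, 0 ≤ a n)
    (hne : {σ : ℝ | Summable fun n => a n * ι n ^ (-σ)}.Nonempty) {σ : ℝ}
    (hσ : sInf {σ : ℝ | Summable fun n => a n * ι n ^ (-σ)} < σ) :
    Summable fun n => a n * ι n ^ (-σ) := by
  obtain ⟨τ, hτ, hτσ⟩ := exists_lt_of_csInf_lt hne hσ
  exact summable_mul_rpow_neg_of_le hι ha hτ hτσ.le

theorem Real.sInf_le_of_mem_of_nonneg {S : Set ℝ} {x : ℝ} (hx : x ∈ S) (hx0 : 0 ≤ x) :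
    sInf S ≤ x := by
  by_cases hS : BddBelow S
  · exact csInf_le hS hx
  · rwa [Real.sInf_of_not_bddBelow hS]

theorem integral_indicator_Ioi_rpow {c : ℝ} (hc : 0 < c) {σ : ℝ} (hσ : 0 < σ) :
    ∫ x in Ioi 0, (Ioi c).indicator (fun x => x ^ (-σ - 1)) x = c ^ (-σ) / σ := by
  rw [integral_indicator measurableSet_Ioi, Measure.restrict_restrict measurableSet_Ioi,
    inter_eq_left.mpr (Ioi_subset_Ioi hc.le), integral_Ioi_rpow_of_lt (by linarith) hc,
    sub_add_cancel, neg_div_neg_eq]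

theorem integrableOn_indicator_Ioi_rpow {c : ℝ} (hc : 0 < c) {σ : ℝ} (hσ : 0 < σ) :
    IntegrableOn ((Ioi c).indicator fun x => x ^ (-σ - 1)) (Ioi 0) :=
  ((integrableOn_Ioi_rpow_of_lt (by linarith) hc).integrable_indicator
    measurableSet_Ioi).integrableOn

theorem ofReal_rpow_mul_summatory (hι : Tendsto ι atTop atTop) (ha : ∀ n, 0 ≤ a n) {p x : ℝ}
    (hx : 0 < x) :
    ENNReal.ofReal (x ^ p * summatory ι a x)
      = ∑' n, (Ioi (ι n)).indicator (fun x => ENNReal.ofReal (a n * x ^ p)) x := by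
  rw [tsum_indicator_Ioi hι, summatory_eq_sum hι, Finset.mul_sum,
    ENNReal.ofReal_sum_of_nonneg fun n _ => mul_nonneg (Real.rpow_nonneg hx.le _) (ha n),
    ← finsum_mem_coe_finset, Finite.coe_toFinset]
  simp only [mul_comm]

theorem lintegral_indicator_Ioi_ofReal_mul_rpow {b c σ : ℝ} (hb : 0 ≤ b) (hc : 0 < c)
    (hσ : 0 < σ) :
    ENNReal.ofReal σ *
        ∫⁻ x in Ioi 0, (Ioi c).indicator (fun x => ENNReal.ofReal (b * x ^ (-σ - 1))) x
      = ENNReal.ofReal (b * c ^ (-σ)) := by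
  have hint : ∫⁻ x in Ioi 0, (Ioi c).indicator (fun x => ENNReal.ofReal (b * x ^ (-σ - 1))) x
      = ENNReal.ofReal (∫ x in Ioi 0, b * (Ioi c).indicator (fun x => x ^ (-σ - 1)) x) := by
    rw [ofReal_integral_eq_lintegral_ofReal ((integrableOn_indicator_Ioi_rpow hc hσ).const_mul b)
      (ae_of_all _ fun x => mul_nonneg hb (indicator_nonneg (fun y hy =>
        Real.rpow_nonneg (hc.le.trans hy.le) _) x))]
    refine lintegral_congr fun x => ?_
    by_cases hx : x ∈ Ioi c <;> simp [hx]
  rw [hint, integral_const_mul, integral_indicator_Ioi_rpow hc hσ, ← ENNReal.ofReal_mul hσ.le]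
  congr 1
  field_simp

theorem lintegral_rpow_mul_summatory (hιpos : ∀ n, 0 < ι n) (hι : Tendsto ι atTop atTop)
    (ha : ∀ n, 0 ≤ a n) {σ : ℝ} (hσ : 0 < σ) :
    ENNReal.ofReal σ * ∫⁻ x in Ioi 0, ENNReal.ofReal (x ^ (-σ - 1) * summatory ι a x)
      = ∑' n, ENNReal.ofReal (a n * ι n ^ (-σ)) := by
  rw [setLIntegral_congr_fun measurableSet_Ioi fun x hx => ofReal_rpow_mul_summatory hι ha hx,
    lintegral_tsum fun n => ?_, ← ENNReal.tsum_mul_left]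
  · exact tsum_congr fun n => lintegral_indicator_Ioi_ofReal_mul_rpow (ha n) (hιpos n) hσ
  · exact ((Measurable.ennreal_ofReal (by fun_prop)).indicator measurableSet_Ioi).aemeasurable

theorem measurable_rpow_mul_summatory (hι : Tendsto ι atTop atTop) (ha : ∀ n, 0 ≤ a n)
    (p : ℝ) :
    Measurable fun x => x ^ p * summatory ι a x :=
  (by fun_prop : Measurable fun x : ℝ => x ^ p).mul (monotone_summatory hι ha).measurable

theorem integrableOn_rpow_mul_summatory_iff (hιpos : ∀ n, 0 < ι n)
    (hι : Tendsto ι atTop atTop) (ha : ∀ n, 0 ≤ a n) {σ : ℝ} (hσ : 0 < σ) :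
    IntegrableOn (fun x => x ^ (-σ - 1) * summatory ι a x) (Ioi 0)
      ↔ Summable fun n => a n * ι n ^ (-σ) := by
  have hterm : ∀ n, 0 ≤ a n * ι n ^ (-σ) := fun n =>
    mul_nonneg (ha n) (Real.rpow_nonneg (hιpos n).le _)
  have hnonneg : 0 ≤ᵐ[volume.restrict (Ioi 0)] fun x => x ^ (-σ - 1) * summatory ι a x :=
    ae_restrict_of_forall_mem measurableSet_Ioi fun x hx =>
      mul_nonneg (Real.rpow_nonneg (le_of_lt hx) _) (summatory_nonneg ha x)
  have hK := lintegral_rpow_mul_summatory hιpos hι ha hσ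
  rw [IntegrableOn, Integrable, hasFiniteIntegral_iff_ofReal hnonneg,
    and_iff_right (measurable_rpow_mul_summatory hι ha _).aestronglyMeasurable]
  constructor
  · intro hfin
    have htsum : ∑' n, ENNReal.ofReal (a n * ι n ^ (-σ)) ≠ ⊤ :=
      hK ▸ ENNReal.mul_ne_top ENNReal.ofReal_ne_top hfin.ne
    exact (ENNReal.summable_toReal htsum).congr fun n => ENNReal.toReal_ofReal (hterm n)
  · intro hsum
    exact ENNReal.lt_top_of_mul_ne_top_right (hK ▸ hsum.tsum_ofReal_ne_top)
      (ENNReal.ofReal_pos.mpr hσ).ne'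

theorem integrableOn_Ioc_rpow_mul_summatory (hιpos : ∀ n, 0 < ι n)
    (hι : Tendsto ι atTop atTop) (ha : ∀ n, 0 ≤ a n) {p : ℝ} (hp : p ≤ 0) (X : ℝ) :
    IntegrableOn (fun x => x ^ p * summatory ι a x) (Ioc 0 X) := by
  obtain ⟨n₀, hn₀⟩ := (Nat.cofinite_eq_atTop ▸ hι).exists_forall_le
  refine Measure.integrableOn_of_bounded (M := ι n₀ ^ p * summatory ι a X) (by simp)
    (measurable_rpow_mul_summatory hι ha p).aestronglyMeasurable ?_
  refine ae_restrict_of_forall_mem measurableSet_Ioc fun x hx => ?_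
  rw [Real.norm_of_nonneg (mul_nonneg (Real.rpow_nonneg hx.1.le _) (summatory_nonneg ha x))]
  rcases le_or_gt x (ι n₀) with hxn₀ | hxn₀
  · rw [summatory_eq_zero_of_forall_le fun n => hxn₀.trans (hn₀ n), mul_zero]
    exact mul_nonneg (Real.rpow_nonneg (hιpos n₀).le _) (summatory_nonneg ha X)
  · exact mul_le_mul (Real.rpow_le_rpow_of_nonpos (hιpos n₀) hxn₀.le hp)
      (monotone_summatory hι ha hx.2) (summatory_nonneg ha x)
      (Real.rpow_nonneg (hιpos n₀).le _)

theorem summable_mul_rpow_neg_of_summatory_le (hιpos : ∀ n, 0 < ι n)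
    (hι : Tendsto ι atTop atTop) (ha : ∀ n, 0 ≤ a n) {σ σ' : ℝ} (hσσ' : σ < σ')
    (hσ' : 0 < σ')
    (hle : ∀ᶠ x in atTop, summatory ι a x ≤ x ^ σ) :
    Summable fun n => a n * ι n ^ (-σ') := by
  obtain ⟨X, hX⟩ := (hle.and (eventually_gt_atTop 0)).exists_forall_of_atTop
  have hX0 : 0 < X := (hX X le_rfl).2
  rw [← integrableOn_rpow_mul_summatory_iff hιpos hι ha hσ', ← Ioc_union_Ioi_eq_Ioi hX0.le]
  refine (integrableOn_Ioc_rpow_mul_summatory hιpos hι ha (by linarith) X).union ?_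
  refine (integrableOn_Ioi_rpow_of_lt (by linarith : σ - σ' - 1 < -1) hX0).mono'
    (measurable_rpow_mul_summatory hι ha _).aestronglyMeasurable ?_
  refine ae_restrict_of_forall_mem measurableSet_Ioi fun x hx => ?_
  have hx0 : 0 < x := hX0.trans hx
  rw [Real.norm_of_nonneg (mul_nonneg (Real.rpow_nonneg hx0.le _) (summatory_nonneg ha x))]
  calc x ^ (-σ' - 1) * summatory ι a x ≤ x ^ (-σ' - 1) * x ^ σ := by
        gcongr
        exact (hX x hx.le).1
    _ = x ^ (σ - σ' - 1) := by rw [← Real.rpow_add hx0]; ring_nf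

section GrowthOrder

variable {f : ℝ → ℝ} {c : ℝ}

theorem tendsto_log_div_log (C : ℝ) :
    Tendsto (fun x => Real.log C / Real.log x) atTop (𝓝 0) :=
  tendsto_const_nhds.div_atTop Real.tendsto_log_atTop

theorem tendsto_add_log_div_log (σ C : ℝ) :
    Tendsto (fun x => σ + Real.log C / Real.log x) atTop (𝓝 σ) := by
  simpa using tendsto_const_nhds.add (tendsto_log_div_log C)

theorem log_div_log_le_log_div_log (hc : 0 < c) (hfc : ∀ᶠ x in atTop, c ≤ f x) :
    (fun x => Real.log c / Real.log x) ≤ᶠ[atTop] fun x => Real.log (f x) / Real.log x := by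
  filter_upwards [hfc, eventually_gt_atTop 1] with x hcx hx
  exact div_le_div_of_nonneg_right (Real.log_le_log hc hcx) (Real.log_pos hx).le

theorem log_div_log_le_add (hc : 0 < c) (hfc : ∀ᶠ x in atTop, c ≤ f x) {C σ : ℝ}
    (hfC : ∀ᶠ x in atTop, f x ≤ C * x ^ σ) :
    (fun x => Real.log (f x) / Real.log x) ≤ᶠ[atTop] fun x => σ + Real.log C / Real.log x := by
  filter_upwards [hfc, hfC, eventually_gt_atTop 1] with x hcx hCx hx
  have hx0 : 0 < x := zero_lt_one.trans hx
  have hfx : 0 < f x := hc.trans_le hcx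
  have hC : 0 < C := (mul_pos_iff_of_pos_right (Real.rpow_pos_of_pos hx0 σ)).mp (hfx.trans_le hCx)
  rw [div_le_iff₀ (Real.log_pos hx)]
  calc Real.log (f x) ≤ Real.log (C * x ^ σ) := Real.log_le_log hfx hCx
    _ = (σ + Real.log C / Real.log x) * Real.log x := by
      rw [Real.log_mul hC.ne' (Real.rpow_pos_of_pos hx0 σ).ne', Real.log_rpow hx0]
      field_simp [(Real.log_pos hx).ne']
      ring

theorem isCoboundedUnder_le_log_div_log (hc : 0 < c) (hfc : ∀ᶠ x in atTop, c ≤ f x) :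
    IsCoboundedUnder (· ≤ ·) atTop fun x => Real.log (f x) / Real.log x :=
  ((tendsto_log_div_log c).isBoundedUnder_ge.mono_ge
    (log_div_log_le_log_div_log hc hfc)).isCoboundedUnder_le

theorem isBoundedUnder_le_log_div_log (hc : 0 < c) (hfc : ∀ᶠ x in atTop, c ≤ f x) {C σ : ℝ}
    (hfC : ∀ᶠ x in atTop, f x ≤ C * x ^ σ) :
    IsBoundedUnder (· ≤ ·) atTop fun x => Real.log (f x) / Real.log x :=
  (tendsto_add_log_div_log σ C).isBoundedUnder_le.mono_le (log_div_log_le_add hc hfc hfC)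

theorem limsup_log_div_log_le (hc : 0 < c) (hfc : ∀ᶠ x in atTop, c ≤ f x) {C σ : ℝ}
    (hfC : ∀ᶠ x in atTop, f x ≤ C * x ^ σ) :
    limsup (fun x => Real.log (f x) / Real.log x) atTop ≤ σ :=
  (limsup_le_limsup (log_div_log_le_add hc hfc hfC) (isCoboundedUnder_le_log_div_log hc hfc)
    (tendsto_add_log_div_log σ C).isBoundedUnder_le).trans_eq
    (tendsto_add_log_div_log σ C).limsup_eq

theorem limsup_log_div_log_nonneg (hc : 0 < c) (hfc : ∀ᶠ x in atTop, c ≤ f x)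
    (hbdd : IsBoundedUnder (· ≤ ·) atTop fun x => Real.log (f x) / Real.log x) :
    0 ≤ limsup (fun x => Real.log (f x) / Real.log x) atTop :=
  (tendsto_log_div_log c).limsup_eq.symm.trans_le (limsup_le_limsup
    (log_div_log_le_log_div_log hc hfc)
    (tendsto_log_div_log c).isBoundedUnder_ge.isCoboundedUnder_le hbdd)

theorem eventually_le_rpow_of_limsup_log_div_log_lt (hc : 0 < c)
    (hfc : ∀ᶠ x in atTop, c ≤ f x)
    (hbdd : IsBoundedUnder (· ≤ ·) atTop fun x => Real.log (f x) / Real.log x) {σ : ℝ}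
    (hσ : limsup (fun x => Real.log (f x) / Real.log x) atTop < σ) :
    ∀ᶠ x in atTop, f x ≤ x ^ σ := by
  filter_upwards [eventually_lt_of_limsup_lt hσ hbdd, hfc, eventually_gt_atTop 1]
    with x hlt hcx hx
  rw [div_lt_iff₀ (Real.log_pos hx)] at hlt
  exact (Real.le_rpow_iff_log_le (hc.trans_le hcx) (zero_lt_one.trans hx)).mpr hlt.le

end GrowthOrder

theorem limsup_log_summatory_div_log (hιpos : ∀ n, 0 < ι n) (hι : Tendsto ι atTop atTop)
    (ha : ∀ n, 0 ≤ a n) (hane : ∃ n, a n ≠ 0)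
    (hne : {σ : ℝ | Summable fun n => a n * ι n ^ (-σ)}.Nonempty)
    (hσc : 0 ≤ sInf {σ : ℝ | Summable fun n => a n * ι n ^ (-σ)}) :
    limsup (fun x => Real.log (summatory ι a x) / Real.log x) atTop
      = sInf {σ : ℝ | Summable fun n => a n * ι n ^ (-σ)} := by
  obtain ⟨n₀, hn₀⟩ := hane
  have hc : 0 < a n₀ := (ha n₀).lt_of_ne' hn₀
  have hlow : ∀ᶠ x in atTop, a n₀ ≤ summatory ι a x :=
    (eventually_gt_atTop (ι n₀)).mono fun x hx => le_summatory hι ha hx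
  have hup : ∀ σ, sInf {σ : ℝ | Summable fun n => a n * ι n ^ (-σ)} < σ →
      ∀ᶠ x in atTop, summatory ι a x ≤ (∑' n, a n * ι n ^ (-σ)) * x ^ σ := fun σ hσ =>
    (eventually_gt_atTop 0).mono fun x hx => summatory_le_tsum_mul_rpow hιpos hι ha
      (hσc.trans hσ.le) (summable_of_sInf_lt hι ha hne hσ) hx
  have hbdd := isBoundedUnder_le_log_div_log hc hlow (hup _ (lt_add_one _))
  refine le_antisymm (le_of_forall_gt_imp_ge_of_dense fun σ hσ =>
    limsup_log_div_log_le hc hlow (hup σ hσ)) (le_of_forall_gt_imp_ge_of_dense fun σ' hσ' => ?_)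
  obtain ⟨σ, hσ, hσσ'⟩ := exists_between hσ'
  have hσ'0 : 0 < σ' := (limsup_log_div_log_nonneg hc hlow hbdd).trans_lt hσ'
  exact Real.sInf_le_of_mem_of_nonneg (summable_mul_rpow_neg_of_summatory_le hιpos hι ha hσσ'
    hσ'0 (eventually_le_rpow_of_limsup_log_div_log_lt hc hlow hbdd hσ)) hσ'0.le

theorem integral_indicator_Ioi_cpow {c : ℝ} (hc : 0 < c) {s : ℂ} (hs : 0 < s.re) :
    ∫ x in Ioi 0, (Ioi c).indicator (fun x : ℝ => (x : ℂ) ^ (-s - 1)) x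
      = (c : ℂ) ^ (-s) / s := by
  rw [integral_indicator measurableSet_Ioi, Measure.restrict_restrict measurableSet_Ioi,
    inter_eq_left.mpr (Ioi_subset_Ioi hc.le), integral_Ioi_cpow_of_lt (by simp; linarith) hc,
    sub_add_cancel, neg_div_neg_eq]

theorem integrableOn_indicator_Ioi_cpow {c : ℝ} (hc : 0 < c) {s : ℂ} (hs : 0 < s.re) :
    IntegrableOn ((Ioi c).indicator fun x : ℝ => (x : ℂ) ^ (-s - 1)) (Ioi 0) :=
  ((integrableOn_Ioi_cpow_of_lt (by simp; linarith) hc).integrable_indicator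
    measurableSet_Ioi).integrableOn

theorem norm_indicator_Ioi_cpow {c : ℝ} (hc : 0 < c) (s : ℂ) (x : ℝ) :
    ‖(Ioi c).indicator (fun x : ℝ => (x : ℂ) ^ (-s - 1)) x‖
      = (Ioi c).indicator (fun x => x ^ (-s.re - 1)) x := by
  by_cases hx : x ∈ Ioi c
  · simp [hx, Complex.norm_cpow_eq_rpow_re_of_pos (hc.trans hx)]
  · simp [hx]

theorem mellinConvergent_summatory (hιpos : ∀ n, 0 < ι n) (hι : Tendsto ι atTop atTop)
    (ha : ∀ n, 0 ≤ a n) {s : ℂ} (hs : 0 < s.re)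
    (hsum : Summable fun n => a n * ι n ^ (-s.re)) :
    MellinConvergent (fun x => (summatory ι a x : ℂ)) (-s) := by
  refine ((integrableOn_rpow_mul_summatory_iff hιpos hι ha hs).mpr hsum).mono' ?_ ?_
  · exact ((by fun_prop : Measurable fun x : ℝ => (x : ℂ) ^ (-s - 1)).smul
      (Complex.measurable_ofReal.comp (monotone_summatory hι ha).measurable)).aestronglyMeasurable
  · refine ae_restrict_of_forall_mem measurableSet_Ioi fun x hx => ?_
    rw [norm_smul, Complex.norm_cpow_eq_rpow_re_of_pos hx, Complex.norm_real,
      Real.norm_of_nonneg (summatory_nonneg ha x)]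
    simp

theorem cpow_mul_summatory (hι : Tendsto ι atTop atTop) (w : ℂ) (x : ℝ) :
    (x : ℂ) ^ w * summatory ι a x
      = ∑' n, (Ioi (ι n)).indicator (fun x : ℝ => (x : ℂ) ^ w * a n) x := by
  rw [tsum_indicator_Ioi hι, summatory_eq_sum hι, Complex.ofReal_sum, Finset.mul_sum,
    ← finsum_mem_coe_finset, Finite.coe_toFinset]

theorem tsum_eq_mul_mellin_summatory (hιpos : ∀ n, 0 < ι n) (hι : Tendsto ι atTop atTop)
    (ha : ∀ n, 0 ≤ a n) {s : ℂ} (hs : 0 < s.re)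
    (hsum : Summable fun n => a n * ι n ^ (-s.re)) :
    ∑' n, (a n : ℂ) * (ι n : ℂ) ^ (-s)
      = s * mellin (fun x => (summatory ι a x : ℂ)) (-s) := by
  have hs0 : s ≠ 0 := fun h => by simp [h] at hs
  set F : ℕ → ℝ → ℂ := fun n =>
    (Ioi (ι n)).indicator fun x : ℝ => (x : ℂ) ^ (-s - 1) * a n
  have hF : ∀ n x, F n x = (Ioi (ι n)).indicator (fun x : ℝ => (x : ℂ) ^ (-s - 1)) x * a n :=
    fun n x => indicator_mul_left _ _ _
  have hnorm : Summable fun n => ∫ x in Ioi 0, ‖F n x‖ := by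
    refine (hsum.div_const s.re).congr fun n => ?_
    simp_rw [hF, norm_mul, norm_indicator_Ioi_cpow (hιpos n), Complex.norm_real,
      Real.norm_of_nonneg (ha n)]
    rw [integral_mul_const, integral_indicator_Ioi_rpow (hιpos n) hs]
    ring
  have hint : ∀ n, IntegrableOn (F n) (Ioi 0) := fun n =>
    ((integrableOn_indicator_Ioi_cpow (hιpos n) hs).mul_const _).congr
      (ae_of_all _ fun x => (hF n x).symm)
  rw [mellin, setIntegral_congr_fun measurableSet_Ioi fun x _ =>
      (smul_eq_mul _ _).trans (cpow_mul_summatory hι _ x),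
    ← (hasSum_integral_of_summable_integral_norm hint hnorm).tsum_eq, ← tsum_mul_left]
  refine tsum_congr fun n => ?_
  simp_rw [hF]
  rw [integral_mul_const, integral_indicator_Ioi_cpow (hιpos n) hs]
  field_simp

theorem cexp_mul_log {x : ℝ} (hx : 0 < x) (w : ℂ) :
    Complex.exp (w * Real.log x) = (x : ℂ) ^ w := by
  rw [Complex.cpow_def_of_ne_zero (by exact_mod_cast hx.ne'), Complex.ofReal_log hx.le, mul_comm]

theorem stmt_5_general (ι : ℕ → ℝ) (hιpos : ∀ n, 0 < ι n)
    (hιtop : Tendsto ι atTop atTop)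
    (a : ℕ → ℝ) (ha : ∀ n, 0 ≤ a n) (hane : ∃ n, a n ≠ 0)
    (hne : {σ : ℝ | Summable fun n => a n * ι n ^ (-σ)}.Nonempty)
    (hσc : 0 ≤ sInf {σ : ℝ | Summable fun n => a n * ι n ^ (-σ)}) :
    limsup (fun x : ℝ => Real.log (∑ᶠ n ∈ {n : ℕ | ι n < x}, a n) / Real.log x) atTop
        = sInf {σ : ℝ | Summable fun n => a n * ι n ^ (-σ)} ∧
    ∀ s : ℂ, sInf {σ : ℝ | Summable fun n => a n * ι n ^ (-σ)} < s.re →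
      IntegrableOn
        (fun x : ℝ => Complex.exp ((-s - 1) * (Real.log x : ℂ)) * (∑ᶠ n ∈ {n : ℕ | ι n < x}, a n))
        (Set.Ioi (0 : ℝ)) ∧
      (∑' n : ℕ, (a n : ℂ) * Complex.exp (-s * (Real.log (ι n) : ℂ)))
        = s * ∫ x in Set.Ioi (0 : ℝ),
            Complex.exp ((-s - 1) * (Real.log x : ℂ)) * (∑ᶠ n ∈ {n : ℕ | ι n < x}, a n) := by
  refine ⟨limsup_log_summatory_div_log hιpos hιtop ha hane hne hσc, fun s hs => ?_⟩
  have hs0 : 0 < s.re := hσc.trans_lt hs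
  have hsum := summable_of_sInf_lt hιtop ha hne hs
  have hkernel : EqOn (fun x : ℝ => (x : ℂ) ^ (-s - 1) • (summatory ι a x : ℂ))
      (fun x : ℝ => Complex.exp ((-s - 1) * (Real.log x : ℂ)) * (summatory ι a x : ℂ))
      (Ioi 0) :=
    fun x hx => by simp only [cexp_mul_log hx, smul_eq_mul]
  refine ⟨(mellinConvergent_summatory hιpos hιtop ha hs0 hsum).congr_fun hkernel
    measurableSet_Ioi, ?_⟩
  simp_rw [cexp_mul_log (hιpos _)]
  rw [tsum_eq_mul_mellin_summatory hιpos hιtop ha hs0 hsum, mellin,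
    setIntegral_congr_fun measurableSet_Ioi hkernel]
  rfl

/-- If the abscissa of convergence `σ_c` of a generalized Dirichlet series with nonnegative,
not identically zero coefficients satisfies `σ_c ≥ 0`, then
`limsup_{x→∞} log A(x) / log x = σ_c` and for `Re s > σ_c` one has
`D(s) = s·∫_0^∞ x^{-s-1} A(x) dx`. -/
theorem stmt_5 (ι : ℕ → ℝ) (hι : StrictMono ι) (hιpos : ∀ n, 0 < ι n)
    (hιtop : Tendsto ι atTop atTop)
    (a : ℕ → ℝ) (ha : ∀ n, 0 ≤ a n) (hane : ∃ n, a n ≠ 0)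
    (hne : {σ : ℝ | Summable fun n => a n * ι n ^ (-σ)}.Nonempty)
    (hσc : 0 ≤ sInf {σ : ℝ | Summable fun n => a n * ι n ^ (-σ)}) :
    limsup (fun x : ℝ => Real.log (∑ᶠ n ∈ {n : ℕ | ι n < x}, a n) / Real.log x) atTop
        = sInf {σ : ℝ | Summable fun n => a n * ι n ^ (-σ)} ∧
    ∀ s : ℂ, sInf {σ : ℝ | Summable fun n => a n * ι n ^ (-σ)} < s.re →
      IntegrableOn
        (fun x : ℝ => Complex.exp ((-s - 1) * (Real.log x : ℂ)) * (∑ᶠ n ∈ {n : ℕ | ι n < x}, a n))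
        (Set.Ioi (0 : ℝ)) ∧
      (∑' n : ℕ, (a n : ℂ) * Complex.exp (-s * (Real.log (ι n) : ℂ)))
        = s * ∫ x in Set.Ioi (0 : ℝ),
            Complex.exp ((-s - 1) * (Real.log x : ℂ)) * (∑ᶠ n ∈ {n : ℕ | ι n < x}, a n) :=
  stmt_5_general ι hιpos hιtop a ha hane hne hσc
end
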